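/- arXiv:math/0609822 — 3 statements merged into one kernel-verified Lean document; each statement's English description precedes it below -/
import Mathlib

section
/- Let m ≥ 1 and p be natural numbers with 1 ≤ p ≤ m. Let λ : Fin m → ℝ be an antitone sequence of nonnegative real numbers (so λ 0 ≥ λ 1 ≥ ... ≥ λ (m-1) ≥ 0). If p(p+1)·(λ 0)² ≤ ∑_{i=0}^{m-1} (λ i)², then ∑_{i=0}^{p-1} λ i ≤ ∑_{i=p}^{m-1} λ i. -/
open Finset in
theorem stmt_0 (m p : ℕ) (hm : 1 ≤ m) (hp : 1 ≤ p) (hpm : p ≤ m)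
    (lam : Fin m → ℝ) (hanti : Antitone lam) (hnonneg : ∀ i, 0 ≤ lam i)
    (hcond : (p * (p + 1) : ℝ) * (lam ⟨0, hm⟩) ^ 2 ≤ ∑ i : Fin m, (lam i) ^ 2) :
    ∑ i ∈ univ.filter (fun i : Fin m => (i : ℕ) < p), lam i ≤
      ∑ i ∈ univ.filter (fun i : Fin m => p ≤ (i : ℕ)), lam i := by
  set l0 := lam ⟨0, hm⟩ with hl0
  have hle : ∀ i : Fin m, lam i ≤ l0 := fun i => hanti (Fin.mk_le_mk.mpr (Nat.zero_le _))
  set H := ∑ i ∈ univ.filter (fun i : Fin m => (i : ℕ) < p), lam i with hH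
  set T := ∑ i ∈ univ.filter (fun i : Fin m => p ≤ (i : ℕ)), lam i with hT
  have hsplit : (∑ i : Fin m, lam i) = H + T := by
    rw [hH, hT, ← Finset.sum_filter_add_sum_filter_not univ (fun i : Fin m => (i : ℕ) < p)]
    congr 1
    apply Finset.sum_congr _ (fun _ _ => rfl)
    ext i; simp [not_lt]
  have hsq : ∑ i : Fin m, (lam i) ^ 2 ≤ l0 * (H + T) := by
    rw [← hsplit, Finset.mul_sum]
    apply Finset.sum_le_sum
    intro i _
    have := hnonneg i
    have := hle i
    nlinarith
  have hcard : (univ.filter (fun i : Fin m => (i : ℕ) < p)).card = p := by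
    have : (univ.filter (fun i : Fin m => (i : ℕ) < p)) =
        (Finset.range p).attachFin (fun i hi => lt_of_lt_of_le (Finset.mem_range.mp hi) hpm) := by
      ext i; simp
    rw [this, Finset.card_attachFin, Finset.card_range]
  have hHle : H ≤ (p : ℝ) * l0 := by
    calc H ≤ ∑ _i ∈ univ.filter (fun i : Fin m => (i : ℕ) < p), l0 :=
          Finset.sum_le_sum (fun i _ => hle i)
      _ = (p : ℝ) * l0 := by rw [Finset.sum_const, hcard]; simp [mul_comm]
  have hHnn : 0 ≤ H := Finset.sum_nonneg (fun i _ => hnonneg i)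
  have hTnn : 0 ≤ T := Finset.sum_nonneg (fun i _ => hnonneg i)
  have hl0nn : 0 ≤ l0 := hnonneg _
  rcases eq_or_lt_of_le hl0nn with h0 | h0
  · have hH0 : H = 0 := le_antisymm (by nlinarith) hHnn
    linarith
  · have hp1 : (1 : ℝ) ≤ (p : ℝ) := by exact_mod_cast hp
    have key : (p * (p + 1) : ℝ) * l0 ≤ H + T := by
      have := le_trans hcond hsq
      nlinarith
    nlinarith
end

section
/- Let m and p be natural numbers with 1 ≤ p ≤ m, let r > 0 be a real number, and let λ : Fin m → ℝ be an antitone sequence of strictly positive real numbers. If ∑_{i=0}^{p-1} λ i ≤ ∑_{i=p}^{m-1} λ i, then ∑_{i=0}^{p-1} (λ i)·(cosh(λ i · r)/sinh(λ i · r)) ≤ ∑_{i=p}^{m-1} (λ i)·(cosh(λ i · r)/sinh(λ i · r)). -/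
open Finset in
lemma coth_antitone_aux {a b : ℝ} (ha : 0 < a) (hab : a ≤ b) :
    Real.cosh b / Real.sinh b ≤ Real.cosh a / Real.sinh a := by
  have hsa : 0 < Real.sinh a := Real.sinh_pos_iff.2 ha
  have hsb : 0 < Real.sinh b := Real.sinh_pos_iff.2 (ha.trans_le hab)
  rw [div_le_div_iff₀ hsb hsa]
  have h := Real.sinh_nonneg_iff.2 (sub_nonneg.2 hab)
  rw [Real.sinh_sub] at h
  nlinarith

open Finset in
theorem stmt_3 (m p : ℕ) (hp : 1 ≤ p) (hpm : p ≤ m) (r : ℝ) (hr : 0 < r)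
    (lam : Fin m → ℝ) (hanti : Antitone lam) (hpos : ∀ i, 0 < lam i)
    (hcond : ∑ i ∈ univ.filter (fun i : Fin m => (i : ℕ) < p), lam i ≤
      ∑ i ∈ univ.filter (fun i : Fin m => p ≤ (i : ℕ)), lam i) :
    ∑ i ∈ univ.filter (fun i : Fin m => (i : ℕ) < p),
        lam i * (Real.cosh (lam i * r) / Real.sinh (lam i * r)) ≤
      ∑ i ∈ univ.filter (fun i : Fin m => p ≤ (i : ℕ)),
        lam i * (Real.cosh (lam i * r) / Real.sinh (lam i * r)) := by
  have hk : p - 1 < m := by omega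
  set k : Fin m := ⟨p - 1, hk⟩ with hkdef
  set c : ℝ := Real.cosh (lam k * r) / Real.sinh (lam k * r) with hc
  have hck : 0 < lam k * r := mul_pos (hpos k) hr
  have hcpos : 0 < c := div_pos (Real.cosh_pos _) (Real.sinh_pos_iff.2 hck)
  have h1 : ∑ i ∈ univ.filter (fun i : Fin m => (i : ℕ) < p),
      lam i * (Real.cosh (lam i * r) / Real.sinh (lam i * r)) ≤
      ∑ i ∈ univ.filter (fun i : Fin m => (i : ℕ) < p), lam i * c := by
    apply Finset.sum_le_sum
    intro i hi
    simp only [Finset.mem_filter] at hi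
    have hik : i ≤ k := by
      rw [Fin.le_def]; simp only [hkdef]; omega
    have hl : lam k ≤ lam i := hanti hik
    exact mul_le_mul_of_nonneg_left
      (coth_antitone_aux (mul_pos (hpos k) hr)
        (mul_le_mul_of_nonneg_right hl hr.le)) (hpos i).le
  have h2 : ∑ i ∈ univ.filter (fun i : Fin m => (i : ℕ) < p), lam i * c ≤
      ∑ i ∈ univ.filter (fun i : Fin m => p ≤ (i : ℕ)), lam i * c := by
    rw [← Finset.sum_mul, ← Finset.sum_mul]
    exact mul_le_mul_of_nonneg_right hcond hcpos.le
  have h3 : ∑ i ∈ univ.filter (fun i : Fin m => p ≤ (i : ℕ)), lam i * c ≤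
      ∑ i ∈ univ.filter (fun i : Fin m => p ≤ (i : ℕ)),
        lam i * (Real.cosh (lam i * r) / Real.sinh (lam i * r)) := by
    apply Finset.sum_le_sum
    intro i hi
    simp only [Finset.mem_filter] at hi
    have hki : k ≤ i := by
      rw [Fin.le_def]; simp only [hkdef]; omega
    have hl : lam i ≤ lam k := hanti hki
    exact mul_le_mul_of_nonneg_left
      (coth_antitone_aux (mul_pos (hpos i) hr)
        (mul_le_mul_of_nonneg_right hl hr.le)) (hpos i).le
  linarith
end

section
/- Let m ≥ 1 and p be natural numbers with 1 ≤ p ≤ m, let r > 0 be a real number, and let λ : Fin m → ℝ be an antitone sequence of strictly positive real numbers. If p(p+1)·(λ 0)² ≤ ∑_{i=0}^{m-1} (λ i)², then ∑_{i=0}^{p-1} (λ i)·(cosh(λ i · r)/sinh(λ i · r)) ≤ ∑_{i=p}^{m-1} (λ i)·(cosh(λ i · r)/sinh(λ i · r)). -/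
private lemma coth_anti' {x y : ℝ} (hx : 0 < x) (hxy : x ≤ y) :
    Real.cosh y / Real.sinh y ≤ Real.cosh x / Real.sinh x := by
  have hsx : 0 < Real.sinh x := Real.sinh_pos_iff.2 hx
  have hsy : 0 < Real.sinh y := Real.sinh_pos_iff.2 (hx.trans_le hxy)
  rw [div_le_div_iff₀ hsy hsx]
  have h := Real.sinh_nonneg_iff.2 (sub_nonneg.2 hxy)
  rw [Real.sinh_sub] at h
  nlinarith

private lemma coth_pos' {x : ℝ} (hx : 0 < x) : 0 < Real.cosh x / Real.sinh x :=
  div_pos (Real.cosh_pos x) (Real.sinh_pos_iff.2 hx)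

open Finset in
theorem stmt_5 (m p : ℕ) (hm : 1 ≤ m) (hp : 1 ≤ p) (hpm : p ≤ m) (r : ℝ) (hr : 0 < r)
    (lam : Fin m → ℝ) (hanti : Antitone lam) (hpos : ∀ i, 0 < lam i)
    (hcond : (p * (p + 1) : ℝ) * (lam ⟨0, hm⟩) ^ 2 ≤ ∑ i : Fin m, (lam i) ^ 2) :
    ∑ i ∈ univ.filter (fun i : Fin m => (i : ℕ) < p),
        lam i * (Real.cosh (lam i * r) / Real.sinh (lam i * r)) ≤
      ∑ i ∈ univ.filter (fun i : Fin m => p ≤ (i : ℕ)),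
        lam i * (Real.cosh (lam i * r) / Real.sinh (lam i * r)) := by
  set L0 := lam ⟨0, hm⟩ with hL0def
  have hL0 : 0 < L0 := hpos _
  have hle : ∀ i : Fin m, lam i ≤ L0 := by
    intro i
    exact hanti (by simp [Fin.le_def])
  -- p < m
  have hsum_sq_le : ∑ i : Fin m, (lam i) ^ 2 ≤ (m : ℝ) * L0 ^ 2 := by
    calc ∑ i : Fin m, (lam i) ^ 2 ≤ ∑ _i : Fin m, L0 ^ 2 := by
          apply Finset.sum_le_sum
          intro i _
          exact pow_le_pow_left₀ (hpos i).le (hle i) 2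
      _ = (m : ℝ) * L0 ^ 2 := by simp [mul_comm]
  have hpm' : p < m := by
    have h1 : (p * (p + 1) : ℝ) ≤ (m : ℝ) := by
      have := hcond.trans hsum_sq_le
      have hL2 : (0:ℝ) < L0 ^ 2 := by positivity
      exact le_of_mul_le_mul_right (by linarith) hL2
    have h2 : (p * (p + 1) : ℕ) ≤ m := by exact_mod_cast (by push_cast; linarith : ((p * (p+1) : ℕ) : ℝ) ≤ (m:ℝ))
    have : p + 1 ≤ p * (p + 1) := Nat.le_mul_of_pos_left _ hp
    omega
  set Lp := lam ⟨p, hpm'⟩ with hLpdef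
  have hLp : 0 < Lp := hpos _
  set C := Real.cosh (Lp * r) / Real.sinh (Lp * r) with hCdef
  have hCpos : 0 < C := coth_pos' (mul_pos hLp hr)
  set A := univ.filter (fun i : Fin m => (i : ℕ) < p) with hA
  set B := univ.filter (fun i : Fin m => p ≤ (i : ℕ)) with hB
  have cardA : A.card = p := by
    rw [hA, Finset.card_filter]
    rw [Fin.sum_univ_eq_sum_range (fun j => if j < p then 1 else 0)]
    rw [← Finset.card_filter]
    have : Finset.filter (fun i => i < p) (Finset.range m) = Finset.range p := by
      ext j
      simp only [Finset.mem_filter, Finset.mem_range]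
      omega
    rw [this, Finset.card_range]
  -- bound on each term of A
  have hAterm : ∀ i ∈ A, lam i * (Real.cosh (lam i * r) / Real.sinh (lam i * r)) ≤ L0 * C := by
    intro i hi
    have hip : (i : ℕ) < p := by simpa [hA] using hi
    have hlam_ge : Lp ≤ lam i := hanti (by simp [Fin.le_def]; omega)
    have hcoth : Real.cosh (lam i * r) / Real.sinh (lam i * r) ≤ C := by
      rw [hCdef]
      exact coth_anti' (mul_pos hLp hr) (mul_le_mul_of_nonneg_right hlam_ge hr.le)
    exact mul_le_mul (hle i) hcoth (coth_pos' (mul_pos (hpos i) hr)).le hL0.le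
  have hLHS : ∑ i ∈ A, lam i * (Real.cosh (lam i * r) / Real.sinh (lam i * r)) ≤ (p : ℝ) * (L0 * C) := by
    calc _ ≤ ∑ _i ∈ A, L0 * C := Finset.sum_le_sum hAterm
      _ = (p : ℝ) * (L0 * C) := by rw [Finset.sum_const, cardA]; simp
  -- bound sum over B
  have hBterm : ∀ i ∈ B, lam i * C ≤ lam i * (Real.cosh (lam i * r) / Real.sinh (lam i * r)) := by
    intro i hi
    have hip : p ≤ (i : ℕ) := by simpa [hB] using hi
    have hlam_le : lam i ≤ Lp := hanti (by simp [Fin.le_def]; omega)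
    have hcoth : C ≤ Real.cosh (lam i * r) / Real.sinh (lam i * r) := by
      rw [hCdef]
      exact coth_anti' (mul_pos (hpos i) hr) (mul_le_mul_of_nonneg_right hlam_le hr.le)
    exact mul_le_mul_of_nonneg_left hcoth (hpos i).le
  -- key: p * L0 ≤ ∑_{B} lam
  have hsplit : ∑ i ∈ A, (lam i)^2 + ∑ i ∈ B, (lam i)^2 = ∑ i : Fin m, (lam i)^2 := by
    rw [hA, hB, show (univ.filter fun i : Fin m => p ≤ (i:ℕ)) =
        univ.filter (fun i : Fin m => ¬ ((i:ℕ) < p)) from by ext i; simp [not_lt]]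
    exact Finset.sum_filter_add_sum_filter_not _ _ _
  have hAsq : ∑ i ∈ A, (lam i)^2 ≤ (p : ℝ) * L0^2 := by
    calc ∑ i ∈ A, (lam i)^2 ≤ ∑ _i ∈ A, L0^2 := by
          apply Finset.sum_le_sum
          intro i _
          exact pow_le_pow_left₀ (hpos i).le (hle i) 2
      _ = (p : ℝ) * L0^2 := by rw [Finset.sum_const, cardA]; simp
  have hBsq : ∑ i ∈ B, (lam i)^2 ≤ L0 * ∑ i ∈ B, lam i := by
    rw [Finset.mul_sum]
    apply Finset.sum_le_sum
    intro i _
    have := hle i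
    nlinarith [hpos i]
  have hkey : (p : ℝ) * L0 ≤ ∑ i ∈ B, lam i := by
    have hp1 : (1 : ℝ) ≤ (p : ℝ) := by exact_mod_cast hp
    have hq : 0 ≤ ((p:ℝ) - 1) * ((p:ℝ) * L0^2) :=
      mul_nonneg (by linarith) (by positivity)
    have hmul : L0 * ((p:ℝ) * L0) ≤ L0 * (∑ i ∈ B, lam i) := by
      nlinarith [hcond, hsplit, hAsq, hBsq]
    exact le_of_mul_le_mul_left hmul hL0
  calc ∑ i ∈ A, lam i * (Real.cosh (lam i * r) / Real.sinh (lam i * r))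
      ≤ (p : ℝ) * (L0 * C) := hLHS
    _ ≤ (∑ i ∈ B, lam i) * C := by
        rw [← mul_assoc]
        exact mul_le_mul_of_nonneg_right hkey hCpos.le
    _ = ∑ i ∈ B, lam i * C := by rw [Finset.sum_mul]
    _ ≤ ∑ i ∈ B, lam i * (Real.cosh (lam i * r) / Real.sinh (lam i * r)) := Finset.sum_le_sum hBterm
end
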